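/- Fix real K×L matrices X̃ and β, a vector p ∈ ℝ^L, and a real constant RSRP_min. For μ ∈ ℝ^K let C(μ) = β ⊙ (𝟙_K pᵀ) ⊙ (μ 𝟙_Lᵀ) and X*(μ) = max{X̃ − C(μ), 0} (entrywise positive part), and let L(X, μ) = (1/2)‖X − X̃‖_F² + ((X ⊙ β)·p − RSRP_min·𝟙_K)ᵀ μ. Then L(X*(μ), μ) = −(1/2)‖X*(μ)‖_F² + (1/2)‖X̃‖_F² − (RSRP_min·𝟙_K)ᵀ μ. Consequently, maximizing μ ↦ L(X*(μ), μ) is equivalent to minimizing μ ↦ (1/2)‖X*(μ)‖_F² + (RSRP_min·𝟙_K)ᵀ μ. -/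

import Mathlib

open Matrix

/-- Squared Frobenius norm of a real matrix: ‖M‖_F² = Σ_{i,j} M_{ij}². -/
noncomputable def frobSq {K L : ℕ} (M : Matrix (Fin K) (Fin L) ℝ) : ℝ :=
  ∑ i : Fin K, ∑ j : Fin L, (M i j) ^ 2

/-- the dual function satisfies
L(X*(μ), μ) = −(1/2)‖X*(μ)‖_F² + (1/2)‖X̃‖_F² − (RSRP_min 𝟙_K)ᵀ μ, hence maximizing
μ ↦ L(X*(μ), μ) is equivalent to minimizing μ ↦ (1/2)‖X*(μ)‖_F² + (RSRP_min 𝟙_K)ᵀ μ. -/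
theorem dual_problem_equivalence
    (K L : ℕ) (Xt β : Matrix (Fin K) (Fin L) ℝ)
    (p : Fin L → ℝ) (RSRPmin : ℝ)
    (C : (Fin K → ℝ) → Matrix (Fin K) (Fin L) ℝ)
    (hC : ∀ μ, C μ = Matrix.hadamard (Matrix.hadamard β
      (Matrix.vecMulVec (fun _ : Fin K => (1:ℝ)) p))
      (Matrix.vecMulVec μ (fun _ : Fin L => (1:ℝ))))
    (Xstar : (Fin K → ℝ) → Matrix (Fin K) (Fin L) ℝ)
    (hX : ∀ μ i j, Xstar μ i j = max (Xt i j - C μ i j) 0)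
    (Lag : Matrix (Fin K) (Fin L) ℝ → (Fin K → ℝ) → ℝ)
    (hLag : ∀ X ν, Lag X ν = (1/2) * frobSq (X - Xt) +
      dotProduct ((Matrix.hadamard X β).mulVec p - fun _ : Fin K => RSRPmin) ν)
    (D : (Fin K → ℝ) → ℝ)
    (hD : ∀ μ, D μ = (1/2) * frobSq (Xstar μ) +
      dotProduct (fun _ : Fin K => RSRPmin) μ) :
    (∀ μ, Lag (Xstar μ) μ =
      -((1/2) * frobSq (Xstar μ)) + (1/2) * frobSq Xt -
        dotProduct (fun _ : Fin K => RSRPmin) μ) ∧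
    (∀ μ₁ μ₂, Lag (Xstar μ₁) μ₁ ≤ Lag (Xstar μ₂) μ₂ ↔ D μ₂ ≤ D μ₁) := by
  have key : ∀ a c : ℝ, (1/2)*(max (a-c) 0 - a)^2 + (max (a-c) 0)*c
      = -((1/2)*(max (a-c) 0)^2) + (1/2)*a^2 := by
    intro a c; rcases le_total (a-c) 0 with h|h
    · rw [max_eq_right h]; ring
    · rw [max_eq_left h]; ring
  have main : ∀ μ, Lag (Xstar μ) μ =
      -((1/2) * frobSq (Xstar μ)) + (1/2) * frobSq Xt -
        dotProduct (fun _ : Fin K => RSRPmin) μ := by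
    intro μ
    rw [hLag]
    simp only [frobSq, dotProduct, Matrix.sub_apply, Pi.sub_apply,
      Matrix.mulVec, dotProduct, Matrix.hadamard_apply]
    have hcc : ∀ i j, C μ i j = β i j * p j * μ i := by
      intro i j; rw [hC]; simp [Matrix.hadamard_apply, Matrix.vecMulVec_apply]
    have expand : ∀ i, ((∑ j, Xstar μ i j * β i j * p j) - RSRPmin) * μ i
        = (∑ j, Xstar μ i j * C μ i j) - RSRPmin * μ i := by
      intro i
      rw [sub_mul, Finset.sum_mul]
      congr 1
      refine Finset.sum_congr rfl fun j _ => ?_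
      rw [hcc]; ring
    simp only [expand, Finset.sum_sub_distrib]
    have step : ∀ i j, (1/2)*(Xstar μ i j - Xt i j)^2 + Xstar μ i j * C μ i j
        = -((1/2)*(Xstar μ i j)^2) + (1/2)*(Xt i j)^2 := by
      intro i j
      rw [hX]
      exact key (Xt i j) (C μ i j)
    have e1 : (1/2:ℝ) * (∑ i, ∑ j, (Xstar μ i j - Xt i j)^2)
        + ∑ i, ∑ j, Xstar μ i j * C μ i j
        = ∑ i, ∑ j, ((1/2)*(Xstar μ i j - Xt i j)^2 + Xstar μ i j * C μ i j) := by
      simp only [Finset.mul_sum, ← Finset.sum_add_distrib]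
    have e2 : (∑ i, ∑ j, (-((1/2)*(Xstar μ i j)^2) + (1/2)*(Xt i j)^2))
        = -((1/2:ℝ) * ∑ i, ∑ j, (Xstar μ i j)^2)
          + (1/2) * ∑ i, ∑ j, (Xt i j)^2 := by
      simp [Finset.sum_add_distrib, Finset.mul_sum, neg_add, Finset.sum_neg_distrib]
    have e3 := (e1.trans (Finset.sum_congr rfl fun i _ =>
      Finset.sum_congr rfl fun j _ => step i j)).trans e2
    linarith
  refine ⟨main, fun μ₁ μ₂ => ?_⟩
  rw [main, main, hD, hD]
  constructor <;> intro h <;> linarith
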